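/- Uniqueness of the DG solution: if $f_u \leq 0$ everywhere, the penalty $\lambda$ is large enough that $a_h$ is coercive, and $u_1, u_2 \in V_h$ both satisfy $a_h(u_i, v_h) = (f(u_i), v_h)$ for all $v_h \in V_h$, then $u_1 = u_2$. -/

import Mathlib

section Uniqueness

variable {W : Type*} [AddCommGroup W] [Module ℝ W] {Vh : Submodule ℝ W}

theorem eq_zero_of_coercive_of_nonpos {q N : W → ℝ} {c : ℝ} (hc : 0 < c)
    (hcoer : ∀ v ∈ Vh, c * N v ^ 2 ≤ q v) (hnorm : ∀ v ∈ Vh, N v = 0 → v = 0)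
    {v : W} (hv : v ∈ Vh) (hq : q v ≤ 0) : v = 0 := by
  have hsq : c * N v ^ 2 ≤ 0 := (hcoer v hv).trans hq
  have hNsq : N v ^ 2 = 0 :=
    le_antisymm (nonpos_of_mul_nonpos_right hsq hc) (sq_nonneg _)
  exact hnorm v hv (pow_eq_zero_iff two_ne_zero |>.mp hNsq)

theorem apply_sub_eq_of_galerkin {a : W →ₗ[ℝ] W →ₗ[ℝ] ℝ} {G : W → W →ₗ[ℝ] ℝ} {u₁ u₂ : W}
    (hs₁ : ∀ v ∈ Vh, a u₁ v = G u₁ v) (hs₂ : ∀ v ∈ Vh, a u₂ v = G u₂ v)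
    {v : W} (hv : v ∈ Vh) : a (u₁ - u₂) v = G u₁ v - G u₂ v := by
  rw [map_sub, LinearMap.sub_apply, hs₁ v hv, hs₂ v hv]

end Uniqueness

theorem stmt13_general
    {W : Type*} [AddCommGroup W] [Module ℝ W]
    (Vh : Submodule ℝ W)
    (a : W →ₗ[ℝ] W →ₗ[ℝ] ℝ)
    (N : W → ℝ)
    (hcoer : ∀ v ∈ Vh, (1/4) * (N v) ^ 2 ≤ a v v)
    (hnorm : ∀ v ∈ Vh, N v = 0 → v = 0)
    (G : W → W →ₗ[ℝ] ℝ)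
    (hmono : ∀ u₁ ∈ Vh, ∀ u₂ ∈ Vh, G u₁ (u₁ - u₂) - G u₂ (u₁ - u₂) ≤ 0)
    (u₁ u₂ : W) (h₁ : u₁ ∈ Vh) (h₂ : u₂ ∈ Vh)
    (hs₁ : ∀ v ∈ Vh, a u₁ v = G u₁ v)
    (hs₂ : ∀ v ∈ Vh, a u₂ v = G u₂ v) :
    u₁ = u₂ := by
  have hdiff : u₁ - u₂ ∈ Vh := Vh.sub_mem h₁ h₂
  have henergy : a (u₁ - u₂) (u₁ - u₂) ≤ 0 := by
    rw [apply_sub_eq_of_galerkin hs₁ hs₂ hdiff]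
    exact hmono u₁ h₁ u₂ h₂
  exact sub_eq_zero.mp <|
    eq_zero_of_coercive_of_nonpos (q := fun v ↦ a v v) (by norm_num) hcoer hnorm hdiff henergy

/-- **Uniqueness of the DG solution of the semilinear problem.**
`W` is the broken Sobolev space, `Vh ⊆ W` the DG finite element space, `a` the SIPDG
bilinear form with a penalty `λ` large enough that it is coercive in the DG norm `N`
(`hcoer`: `¼ ⦀v_h⦀_h² ≤ a_h(v_h, v_h)`); `N = ⦀·⦀_h` is a genuine norm on `V_h`
(`hnorm`).  `G w v = (f(w), v)` is the nonlinear right-hand side pairing for a `C²`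
nonlinearity `f` with `f_u ≤ 0`; by the mean value theorem,
`(f(u₁) - f(u₂), u₁ - u₂) = (f_u(θ)(u₁ - u₂), u₁ - u₂) ≤ 0`, which is the
monotonicity hypothesis `hmono`.  Conclusion: if `u₁, u₂ ∈ V_h` both satisfy
`a_h(u_i, v_h) = (f(u_i), v_h)` for all `v_h ∈ V_h`, then `u₁ = u₂`. -/
theorem stmt13
    {W : Type*} [AddCommGroup W] [Module ℝ W]
    (Vh : Submodule ℝ W)
    (a : W →ₗ[ℝ] W →ₗ[ℝ] ℝ)
    (N : W → ℝ) (hNnn : ∀ v, 0 ≤ N v)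
    (hcoer : ∀ v ∈ Vh, (1/4) * (N v) ^ 2 ≤ a v v)
    (hnorm : ∀ v ∈ Vh, N v = 0 → v = 0)
    (G : W → W →ₗ[ℝ] ℝ)
    (hmono : ∀ u₁ ∈ Vh, ∀ u₂ ∈ Vh, G u₁ (u₁ - u₂) - G u₂ (u₁ - u₂) ≤ 0)
    (u₁ u₂ : W) (h₁ : u₁ ∈ Vh) (h₂ : u₂ ∈ Vh)
    (hs₁ : ∀ v ∈ Vh, a u₁ v = G u₁ v)
    (hs₂ : ∀ v ∈ Vh, a u₂ v = G u₂ v) :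
    u₁ = u₂ :=
  stmt13_general Vh a N hcoer hnorm G hmono u₁ u₂ h₁ h₂ hs₁ hs₂
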